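/- Let h be a multisegment and n a nonempty multisegment admissible to h, and let a be the smallest integer with n[a] ≠ ∅. Then for every segment Δ̄ in n[a+1], |{Δ ∈ n[a] : Δ̄ ⊆ Δ}| ≤ |{Δ ∈ fs(n,h) : Δ̄ ⊆ Δ}|, where cardinalities are counted with multiplicity. -/

import Mathlib

noncomputable section
open Classical

/-- A segment `[a,b]`: a pair of integers with `a ≤ b`, identified with the
integer interval `{a, a+1, …, b}`. -/
def Seg : Type := {p : ℤ × ℤ // p.1 ≤ p.2}

/-- Constructor for segments. -/
def Seg.mk (a b : ℤ) (hab : a ≤ b) : Seg := Subtype.mk (a, b) hab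

instance : DecidableEq Seg := inferInstanceAs (DecidableEq {p : ℤ × ℤ // p.1 ≤ p.2})

instance : Inhabited Seg := ⟨Seg.mk 0 0 le_rfl⟩

/-- The lexicographic ordering `≼ᴸ` on segments: `[a,b] ≤ [a',b']` iff `a < a'`,
or `a = a'` and `b ≤ b'`. -/
instance : LinearOrder Seg :=
  LinearOrder.lift' (fun Δ => toLex (Subtype.val Δ))
    (fun _ _ hh => Subtype.ext (toLex.injective hh))

/-- `a(Δ)`, the left endpoint. -/
def segA (Δ : Seg) : ℤ := (Subtype.val Δ).1

/-- `b(Δ)`, the right endpoint. -/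
def segB (Δ : Seg) : ℤ := (Subtype.val Δ).2

/-- `[a,b]` as a multiset of segments: a singleton if `a ≤ b`, empty otherwise
("empty segments are discarded"). -/
def mkSeg? (a b : ℤ) : Multiset Seg := if h : a ≤ b then {Seg.mk a b h} else 0

/-- `⁻Δ = [a+1,b]`, as a multiset (the empty segment being discarded). -/
def negSeg (Δ : Seg) : Multiset Seg := mkSeg? (segA Δ + 1) (segB Δ)

/-- `⁻m` for a multisegment `m`. -/
def negM (m : Multiset Seg) : Multiset Seg := m.bind negSeg

/-- `m[c]`: the submultiset of segments of `m` starting at `c`. -/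
def atc (m : Multiset Seg) (c : ℤ) : Multiset Seg := m.filter (fun Δ => segA Δ = c)

/-- `Δ ⊆ Δ'` as intervals. -/
def Subseg (Δ Δ' : Seg) : Prop := segA Δ' ≤ segA Δ ∧ segB Δ ≤ segB Δ'

/-- Two segments are linked: their union is an interval and neither contains
the other. -/
def Linked (Δ Δ' : Seg) : Prop :=
  segA Δ ≤ segB Δ' + 1 ∧ segA Δ' ≤ segB Δ + 1 ∧ ¬ Subseg Δ Δ' ∧ ¬ Subseg Δ' Δ

/-- `Δ = [a,b]` is admissible to `h`: `h` contains a segment `[a,c]` with `c ≥ b`. -/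
def SegAdmissible (Δ : Seg) (h : Multiset Seg) : Prop :=
  ∃ D ∈ h, segA D = segA Δ ∧ segB Δ ≤ segB D

/-- The tail of the removal sequence: recursively pick the `≺ᴸ`-minimal segment
`[aᵢ,bᵢ]` of `h` with `a_{i-1} < aᵢ` and `b ≤ bᵢ < b_{i-1}`. -/
def removalTail (h : Multiset Seg) (b : ℤ) : ℕ → ℤ → ℤ → List Seg
  | 0, _, _ => []
  | fuel + 1, aprev, bprev =>
    if hx : ∃ D, (D ∈ h ∧ aprev < segA D ∧ b ≤ segB D ∧ segB D < bprev) ∧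
        ∀ D', (D' ∈ h ∧ aprev < segA D' ∧ b ≤ segB D' ∧ segB D' < bprev) → D ≤ D' then
      Classical.choose hx ::
        removalTail h b fuel (segA (Classical.choose hx)) (segB (Classical.choose hx))
    else []

/-- The removal sequence for `(Δ, h)`: `Δ₁` is a shortest segment `[a,c]` of `h`
with `c ≥ b`, followed by the recursively chosen segments. (Empty if `Δ` is not
admissible to `h`.) -/
def removalSeq (Δ : Seg) (h : Multiset Seg) : List Seg :=
  if hx : ∃ D, (D ∈ h ∧ segA D = segA Δ ∧ segB Δ ≤ segB D) ∧
      ∀ D', (D' ∈ h ∧ segA D' = segA Δ ∧ segB Δ ≤ segB D') → segB D ≤ segB D' then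
    Classical.choose hx ::
      removalTail h (segB Δ) (segB (Classical.choose hx) - segB Δ).toNat
        (segA (Classical.choose hx)) (segB (Classical.choose hx))
  else []

/-- `Υ(Δ,h)`: the first segment of the removal sequence for `(Δ,h)`. -/
def Upsilon (Δ : Seg) (h : Multiset Seg) : Seg := (removalSeq Δ h).headD default

/-- The truncations `Δ₁ᵗʳ, …, Δᵣᵗʳ` of a removal sequence:
`Δᵢᵗʳ = [a_{i+1}, bᵢ]` for `i < r` and `Δᵣᵗʳ = [b+1, bᵣ]` (possibly empty). -/
def truncList (b : ℤ) : List Seg → Multiset Seg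
  | [] => 0
  | [D] => mkSeg? (b + 1) (segB D)
  | D :: D' :: rest => mkSeg? (segA D') (segB D) + truncList b (D' :: rest)

/-- `r(Δ,h) = h − Δ₁ − … − Δᵣ + Δ₁ᵗʳ + … + Δᵣᵗʳ`, with `none` playing the role
of the infinity multisegment `∞`. -/
def segRemove (Δ : Seg) (h : Multiset Seg) : Option (Multiset Seg) :=
  if SegAdmissible Δ h then
    some (h - (removalSeq Δ h : Multiset Seg) + truncList (segB Δ) (removalSeq Δ h))
  else none

/-- Iterated removal along a list of segments (also `r(Δ,∞) = ∞`). -/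
def rList : List Seg → Option (Multiset Seg) → Option (Multiset Seg)
  | [], o => o
  | Δ :: rest, o => rList rest (o.bind (fun x => segRemove Δ x))

/-- `r(m,h)` for a multisegment `m`: apply the removals along the segments of
`m` listed in an ascending (here: `≺ᴸ`-sorted) order. -/
def rM (m h : Multiset Seg) : Option (Multiset Seg) :=
  rList (m.sort (· ≤ ·)) (some h)

/-- The smallest integer `a` with `n[a] ≠ ∅` (junk value `0` for `n = ∅`). -/
def minStart (n : Multiset Seg) : ℤ := ((n.map segA).sort (· ≤ ·)).headD 0

/-- `Υ(Δ₁,r₀), Υ(Δ₂,r₁), …` computed sequentially along a list of segments. -/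
def fsList : List Seg → Multiset Seg → Multiset Seg
  | [], _ => 0
  | Δ :: rest, h =>
    Upsilon Δ h ::ₘ
      (match segRemove Δ h with
        | some h' => fsList rest h'
        | none => 0)

/-- `fs(n,h)`: with `a` the smallest integer such that `n[a] ≠ ∅` and
`n[a] = {Δ₁, …, Δₖ}`, this is `{Υ(Δ₁,r₀), …, Υ(Δₖ,r_{k-1})}` if `n[a]` is
admissible to `h`, and `∅` otherwise (also `fs(∅,h) = ∅`). -/
def fs (n h : Multiset Seg) : Multiset Seg :=
  if n = 0 then 0
  else if rM (atc n (minStart n)) h ≠ none then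
    fsList ((atc n (minStart n)).sort (· ≤ ·)) h
  else 0

/-- `trr(n,h) = h − fs(n,h) + ⁻(fs(n,h))`. -/
def trr (n h : Multiset Seg) : Multiset Seg := h - fs n h + negM (fs n h)

/-- `trd(n,h) = n − n[a] + ⁻(n[a])` where `a` is the smallest integer with
`n[a] ≠ ∅` (and `trd(∅,h) = ∅`). -/
def trd (n h : Multiset Seg) : Multiset Seg :=
  if n = 0 then 0 else n - atc n (minStart n) + negM (atc n (minStart n))

/-- The pairs `(nᵢ, hᵢ)` of the fine chain: `n₀ = n`, `h₀ = h`,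
`nᵢ = trd(n_{i-1}, h_{i-1})`, `hᵢ = trr(n_{i-1}, h_{i-1})`. -/
def fcPair (n h : Multiset Seg) : ℕ → Multiset Seg × Multiset Seg
  | 0 => (n, h)
  | i + 1 => (trd (fcPair n h i).1 (fcPair n h i).2, trr (fcPair n h i).1 (fcPair n h i).2)

/-- The fine chain `fc_h(n)`: the sequence `fs(n₀,h₀), fs(n₁,h₁), …`. -/
def fc (h n : Multiset Seg) (i : ℕ) : Multiset Seg := fs (fcPair n h i).1 (fcPair n h i).2

/-- `n` is obtained from `m` by an elementary intersection-union operation: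
`n = m − Δ − Δ' + (Δ ∪ Δ') + (Δ ∩ Δ')` for a pair of linked segments `Δ, Δ'`
of `m` (intersection omitted if empty). -/
def elemIU (m n : Multiset Seg) : Prop :=
  ∃ Δ Δ', Δ ∈ m ∧ Δ' ∈ m.erase Δ ∧ Linked Δ Δ' ∧
    n = (m.erase Δ).erase Δ'
        + mkSeg? (min (segA Δ) (segA Δ')) (max (segB Δ) (segB Δ'))
        + mkSeg? (max (segA Δ) (segA Δ')) (min (segB Δ) (segB Δ'))

/-- The Zelevinsky ordering: `n ≤_Z m` iff `n = m` or `n` is obtained from `m`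
by a finite sequence of elementary intersection-union operations. -/
def leZ (n m : Multiset Seg) : Prop := Relation.ReflTransGen elemIU m n

/-- The cuspidal support of a multisegment: the multiset union of its segments,
as a multiset of integers. -/
def csupp (m : Multiset Seg) : Multiset ℤ :=
  m.bind (fun Δ => (Finset.Icc (segA Δ) (segB Δ)).val)

/-- The `b`-values of a multisegment, sorted in descending order. -/
def bDesc (m : Multiset Seg) : List ℤ := ((m.map segB).sort (· ≤ ·)).reverse

/-- `m₁ ≤ᵃ_c m₂` for multisegments at a point `c`: with segments labelled
`Δ_{1,k} ≤ᵃ_c … ≤ᵃ_c Δ_{1,1}` and `Δ_{2,r} ≤ᵃ_c … ≤ᵃ_c Δ_{2,1}`, require `k ≤ r`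
and `Δ_{1,i} ≤ᵃ_c Δ_{2,i}` for all `i ≤ k`. -/
def leA (m₁ m₂ : Multiset Seg) : Prop :=
  (bDesc m₁).length ≤ (bDesc m₂).length ∧
    ∀ i < (bDesc m₁).length, (bDesc m₁).getD i 0 ≤ (bDesc m₂).getD i 0

/-- `m₁ <ᵃ_c m₂`. -/
def ltA (m₁ m₂ : Multiset Seg) : Prop := leA m₁ m₂ ∧ m₁ ≠ m₂

/-- The fine chain ordering `n <^{fc} n'` (with respect to `h`). -/
def ltFC (h n n' : Multiset Seg) : Prop :=
  ∃ i, (∀ j < i, fc h n j = fc h n' j) ∧ ltA (fc h n i) (fc h n' i)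

/-- `n ≤^{fc} n'`: either `n <^{fc} n'` or the two fine chains are equal. -/
def leFC (h n n' : Multiset Seg) : Prop := ltFC h n n' ∨ ∀ i, fc h n i = fc h n' i

/-- Local minimizability of `(n,h)`: with `a` the smallest integer such that
`n[a] ≠ ∅`, there is a segment `Δ̄` in `n[a+1]` with
`|{Δ ∈ n[a] : Δ̄ ⊆ Δ}| < |{Δ ∈ fs(n,h) : Δ̄ ⊆ Δ}|`. -/
def locallyMin (n h : Multiset Seg) : Prop :=
  ∃ Δb ∈ atc n (minStart n + 1),
    ((atc n (minStart n)).filter (fun Δ => Subseg Δb Δ)).card <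
      ((fs n h).filter (fun Δ => Subseg Δb Δ)).card

/-- The shortest segment of the removal sequence for `(Δ,h)` whose interval
contains `x` (by the nesting property, the last such one in the sequence). -/
def shortestCont (Δ : Seg) (h : Multiset Seg) (x : ℤ) : Seg :=
  (((removalSeq Δ h).filter (fun D => decide (segA D ≤ x ∧ x ≤ segB D))).getLast?).getD default

/-- The non-overlapping property for `(Δ, Δ', h)`: for the shortest segment `Δ̄`
in the removal sequence for `(Δ,h)` containing `a(Δ') − 1`, one has `Δ' ⊄ Δ̄`. -/
def NonOverlap (Δ Δ' : Seg) (h : Multiset Seg) : Prop :=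
  ¬ Subseg Δ' (shortestCont Δ h (segA Δ' - 1))

/-- `ε_Δ(h) = |{Δ̃ ∈ h[a(Δ)] : Δ ⊆ Δ̃}|`, counted with multiplicity. -/
def epsilonSeg (Δ : Seg) (h : Multiset Seg) : ℕ :=
  ((atc h (segA Δ)).filter (fun D => Subseg Δ D)).card

/-- `η_{Δ'}(h) = η_{Δ'}(h')`: componentwise equality of
`(ε_{[a',b']}, ε_{[a'+1,b']}, …, ε_{[b',b']})`. -/
def etaEq (Δ' : Seg) (h h' : Multiset Seg) : Prop :=
  ∀ c, segA Δ' ≤ c → ∀ hc : c ≤ segB Δ',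
    epsilonSeg (Seg.mk c (segB Δ') hc) h = epsilonSeg (Seg.mk c (segB Δ') hc) h'

/-- The intermediate segment property for `(Δ, Δ', h)`. -/
def IntermediateSeg (Δ Δ' : Seg) (h : Multiset Seg) : Prop :=
  ∃ D ∈ h, segA Δ ≤ segA D ∧ segA D < segA Δ' ∧ segB Δ ≤ segB D ∧ segB D < segB Δ'

/-- Helper to build segments from literals. -/
def sg (a b : ℤ) (hab : a ≤ b := by decide) : Seg := Seg.mk a b hab

/-!
Each segment `Υ(Δᵢ, rᵢ₋₁)` of `fs(n,h)` starts at `a(Δᵢ)` and ends at or after `b(Δᵢ)`, so it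
contains `Δᵢ`; hence `fs(n,h)` is matched one-to-one with `n[a]` by the containment relation,
and any `Δ̄` contained in `Δᵢ` is contained in its partner. Admissibility of `n[a]` comes from
that of `n`, since in the `≺ᴸ`-sorted list of `n` the segments of `n[a]` come first.
-/

theorem Multiset.Rel.countP_le {α β : Type*} {r : α → β → Prop} {s : Multiset α}
    {t : Multiset β} (hst : Multiset.Rel r s t) {p : α → Prop} {q : β → Prop}
    [DecidablePred p] [DecidablePred q] (hpq : ∀ a b, r a b → p a → q b) :
    s.countP p ≤ t.countP q := by
  induction hst with
  | zero => simp
  | @cons a b _ _ hab _ ih =>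
    rw [Multiset.countP_cons, Multiset.countP_cons]
    by_cases ha : p a
    · simp [ha, hpq a b hab ha, ih]
    · simp only [ha, if_false, add_zero]
      omega

theorem List.filter_append_filter_not_of_pairwise {α : Type*} {p : α → Bool} {l : List α}
    (hl : l.Pairwise (fun x y => p y → p x)) :
    l.filter p ++ l.filter (fun x => !p x) = l := by
  induction l with
  | nil => rfl
  | cons y t ih =>
    rw [List.pairwise_cons] at hl
    by_cases hy : p y
    · simp [hy, ih hl.2]
    · have ht : t.filter p = [] :=
        List.filter_eq_nil_iff.2 fun x hx hpx => hy (hl.1 x hx hpx)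
      have ht' : t.filter (fun x => !p x) = t :=
        List.filter_eq_self.2 fun x hx => by simpa using fun hpx => hy (hl.1 x hx hpx)
      simp [hy, ht, ht']

theorem Multiset.sort_filter {α : Type*} (r : α → α → Prop) [DecidableRel r] [IsTrans α r]
    [Std.Antisymm r] [Std.Total r] (p : α → Prop) [DecidablePred p] (s : Multiset α) :
    (s.filter p).sort r = (s.sort r).filter p := by
  refine List.Perm.eq_of_pairwise' (Multiset.pairwise_sort _ _)
    ((Multiset.pairwise_sort _ _).filter _) (Multiset.coe_eq_coe.1 ?_)
  rw [Multiset.sort_eq, ← Multiset.filter_coe, Multiset.sort_eq]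

theorem Subseg.trans {Δ Δ' Δ'' : Seg} (h₁ : Subseg Δ Δ') (h₂ : Subseg Δ' Δ'') :
    Subseg Δ Δ'' :=
  ⟨h₂.1.trans h₁.1, h₁.2.trans h₂.2⟩

theorem segA_le_segA_of_le {Δ Δ' : Seg} (h : Δ ≤ Δ') : segA Δ ≤ segA Δ' :=
  (Prod.Lex.le_iff.1 (show toLex Δ.val ≤ toLex Δ'.val from h)).elim le_of_lt (le_of_eq ·.1)

theorem minStart_le_segA {n : Multiset Seg} {Δ : Seg} (hΔ : Δ ∈ n) : minStart n ≤ segA Δ := by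
  have hmem : segA Δ ∈ (n.map segA).sort (· ≤ ·) := by simpa using ⟨Δ, hΔ, rfl⟩
  have hsorted := Multiset.pairwise_sort (n.map segA) (· ≤ ·)
  unfold minStart
  cases hl : (n.map segA).sort (· ≤ ·) with
  | nil => simp [hl] at hmem
  | cons y t =>
    rw [hl, List.pairwise_cons] at hsorted
    rw [hl, List.mem_cons] at hmem
    rcases hmem with rfl | hmem
    · rfl
    · exact hsorted.1 _ hmem

theorem exists_shortest_of_segAdmissible {Δ : Seg} {h : Multiset Seg}
    (hadm : SegAdmissible Δ h) :
    ∃ D, (D ∈ h ∧ segA D = segA Δ ∧ segB Δ ≤ segB D) ∧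
      ∀ D', (D' ∈ h ∧ segA D' = segA Δ ∧ segB Δ ≤ segB D') → segB D ≤ segB D' := by
  obtain ⟨D₀, hD₀, hD₀a, hD₀b⟩ := hadm
  obtain ⟨D, hD, hmin⟩ := Finset.exists_min_image
    (h.toFinset.filter fun D => segA D = segA Δ ∧ segB Δ ≤ segB D) segB
    ⟨D₀, by simp [hD₀, hD₀a, hD₀b]⟩
  simp only [Finset.mem_filter, Multiset.mem_toFinset] at hD hmin
  exact ⟨D, hD, fun D' hD' => hmin D' hD'⟩

theorem subseg_upsilon {Δ : Seg} {h : Multiset Seg} (hadm : SegAdmissible Δ h) :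
    Subseg Δ (Upsilon Δ h) := by
  have hx := exists_shortest_of_segAdmissible hadm
  have hspec := (Classical.choose_spec hx).1
  rw [Upsilon, removalSeq, dif_pos hx, List.headD_cons]
  exact ⟨hspec.2.1.le, hspec.2.2⟩

theorem segAdmissible_of_segRemove_eq_some {Δ : Seg} {h h' : Multiset Seg}
    (hr : segRemove Δ h = some h') : SegAdmissible Δ h := by
  by_contra hna
  simp [segRemove, hna] at hr

theorem rList_none (L : List Seg) : rList L none = none := by
  induction L with
  | nil => rfl
  | cons _ _ ih => exact ih

theorem rList_append (L₁ L₂ : List Seg) (o : Option (Multiset Seg)) :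
    rList (L₁ ++ L₂) o = rList L₂ (rList L₁ o) := by
  induction L₁ generalizing o with
  | nil => rfl
  | cons _ _ ih => exact ih _

theorem rel_subseg_fsList :
    ∀ (L : List Seg) (h : Multiset Seg), rList L (some h) ≠ none →
      Multiset.Rel Subseg (L : Multiset Seg) (fsList L h)
  | [], _, _ => Multiset.Rel.zero
  | Δ :: rest, h, hne => by
    obtain ⟨h', hh'⟩ : ∃ h', segRemove Δ h = some h' := by
      refine Option.ne_none_iff_exists'.1 fun hc => hne ?_
      simp only [rList, Option.bind_some, hc, rList_none]
    have hrest : rList rest (some h') ≠ none := by simpa [rList, hh'] using hne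
    rw [fsList, hh', ← Multiset.cons_coe]
    exact .cons (subseg_upsilon (segAdmissible_of_segRemove_eq_some hh'))
      (rel_subseg_fsList rest h' hrest)

theorem rM_atc_minStart_ne_none {n h : Multiset Seg} (hadm : rM n h ≠ none) :
    rM (atc n (minStart n)) h ≠ none := by
  set p : Seg → Bool := fun Δ => decide (segA Δ = minStart n)
  have hprefix : (n.sort (· ≤ ·)).Pairwise (fun x y => p y → p x) := by
    refine (Multiset.pairwise_sort n (· ≤ ·)).imp_of_mem fun {x y} hx _ hxy hy => ?_
    have hxn := minStart_le_segA ((Multiset.mem_sort _).1 hx)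
    have := segA_le_segA_of_le hxy
    simp only [p, decide_eq_true_eq] at hy ⊢
    omega
  have hsort : (atc n (minStart n)).sort (· ≤ ·) = (n.sort (· ≤ ·)).filter p :=
    Multiset.sort_filter _ _ n
  intro hc
  rw [rM, hsort] at hc
  apply hadm
  rw [rM, ← List.filter_append_filter_not_of_pairwise hprefix, rList_append, hc, rList_none]

theorem statement9_general (n h : Multiset Seg) (hadm : rM n h ≠ none) :
    ∀ Δb ∈ atc n (minStart n + 1),
      ((atc n (minStart n)).filter (fun Δ => Subseg Δb Δ)).card ≤
        ((fs n h).filter (fun Δ => Subseg Δb Δ)).card := by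
  intro Δb hΔb
  have hn : n ≠ 0 := by rintro rfl; simp [atc] at hΔb
  have hadm_min := rM_atc_minStart_ne_none hadm
  have hrel := rel_subseg_fsList _ h hadm_min
  rw [Multiset.sort_eq] at hrel
  rw [fs, if_neg hn, if_pos hadm_min, ← Multiset.countP_eq_card_filter,
    ← Multiset.countP_eq_card_filter]
  exact hrel.countP_le fun _ _ hΔ hsub => hsub.trans hΔ

/-- the non-strict inequality in Definition of local
minimizability always holds. -/
theorem statement9 (n h : Multiset Seg) (hn : n ≠ 0) (hadm : rM n h ≠ none) :
    ∀ Δb ∈ atc n (minStart n + 1),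
      ((atc n (minStart n)).filter (fun Δ => Subseg Δb Δ)).card ≤
        ((fs n h).filter (fun Δ => Subseg Δb Δ)).card :=
  statement9_general n h hadm
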